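/- Under the combining setup with ψ of Fisher type, assume that (ii) there exists j0 ∈ {1,…,r} such that P(T_{n,j0}^{[1]} ≥ T_{n,j0}) → 0 as n → ∞, and (iii) for every n, almost surely, for each j ∈ {1,…,r} the bootstrap replicates T_{n,j}^{[1]}, …, T_{n,j}^{[M_n]} are pairwise distinct. Then the global approximate p-value p_{n,M_n}(W_{n,M_n}^{[0]}) = (1/M_n) Σ_{k=1}^{M_n} 1(W_{n,M_n}^{[k]} ≥ W_{n,M_n}^{[0]}) converges to 0 in probability as n → ∞. -/

import Mathlib

/-!
If the observed marginal p-value of the consistent coordinate `j0` is at most `δ`, the Fisher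
statistic of the data is at least `w j0 * φ δ = (∑ j, w j) * φ x`. A replicate whose Fisher
statistic is at least as large must then have some marginal p-value `≤ x`; as the replicates are
tie-free, distinct replicates have distinct ranks in each coordinate, so each coordinate has at
most `x * (M + 1)` such replicates and the global p-value is at most `2 * r * x`.

It remains that the observed marginal p-value tends to `0` in probability. Since `X` is
independent of every `V l`, all replicates exceed the observed statistic with the same
probability, so its mean is `(1 / 2 + M * P (T 0 ≤ T 1)) / (M + 1)`, and Markov's inequality
applies.
-/

open MeasureTheory ProbabilityTheory Filter Topology
open Finset

theorem card_filter_card_filter_le_le {ι α : Type*} [LinearOrder α] {s : Finset ι}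
    {t : ι → α} (ht : Set.InjOn t s) (m : ℕ) :
    #{k ∈ s | #{l ∈ s | t k ≤ t l} ≤ m} ≤ m := by
  have hrank_anti : ∀ a ∈ s, ∀ b ∈ s, t a < t b →
      #{l ∈ s | t b ≤ t l} < #{l ∈ s | t a ≤ t l} := by
    refine fun a ha b _ hab => card_lt_card ⟨?_, fun hsub => ?_⟩
    · exact monotone_filter_right s fun l _ (hl : t b ≤ t l) => hab.le.trans hl
    · exact (hab.trans_le (mem_filter.1 (hsub (mem_filter.2 ⟨ha, le_rfl⟩))).2).false
  calc #{k ∈ s | #{l ∈ s | t k ≤ t l} ≤ m} ≤ #(Icc 1 m) := by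
        refine card_le_card_of_injOn (fun k => #{l ∈ s | t k ≤ t l}) (fun k hk => ?_) ?_
        · rw [coe_filter] at hk
          exact mem_Icc.2 ⟨card_pos.2 ⟨k, mem_filter.2 ⟨hk.1, le_rfl⟩⟩, hk.2⟩
        · intro a ha b hb hab
          rw [coe_filter] at ha hb
          by_contra hne
          rcases lt_or_gt_of_ne (ht.ne ha.1 hb.1 hne) with h | h
          · exact (hrank_anti a ha.1 b hb.1 h).ne' hab
          · exact (hrank_anti b hb.1 a ha.1 h).ne hab
    _ = m := Nat.card_Icc 1 m

/-- `t 0` is the observed statistic and `t 1, …, t M` are its bootstrap replicates. -/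
noncomputable def approxPValue (M : ℕ) (t : ℕ → ℝ) (i : ℕ) : ℝ :=
  1 / ((M : ℝ) + 1) * (1 / 2 + ∑ l ∈ Icc 1 M, if t i ≤ t l then (1 : ℝ) else 0)

theorem approxPValue_eq (M : ℕ) (t : ℕ → ℝ) (i : ℕ) :
    approxPValue M t i = (1 / 2 + #{l ∈ Icc 1 M | t i ≤ t l}) / ((M : ℝ) + 1) := by
  rw [approxPValue, sum_boole, one_div_mul_eq_div]

theorem approxPValue_mem_Ioo (M : ℕ) (t : ℕ → ℝ) (i : ℕ) : approxPValue M t i ∈ Set.Ioo 0 1 := by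
  have hcard : (#{l ∈ Icc 1 M | t i ≤ t l} : ℝ) ≤ M := by
    exact_mod_cast (card_filter_le _ _).trans (Nat.card_Icc 1 M).le
  rw [approxPValue_eq]
  exact ⟨by positivity, (div_lt_one (by positivity)).2 (by linarith)⟩

theorem card_filter_approxPValue_le {M : ℕ} {t : ℕ → ℝ} (ht : Set.InjOn t (Icc 1 M))
    {x : ℝ} (hx : 0 ≤ x) : (#{k ∈ Icc 1 M | approxPValue M t k ≤ x} : ℝ) ≤ x * (M + 1) := by
  have hsub : {k ∈ Icc 1 M | approxPValue M t k ≤ x} ⊆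
      {k ∈ Icc 1 M | #{l ∈ Icc 1 M | t k ≤ t l} ≤ ⌊x * (M + 1)⌋₊} := by
    refine monotone_filter_right _ fun k _ (hk : approxPValue M t k ≤ x) => ?_
    rw [approxPValue_eq, div_le_iff₀ (by positivity)] at hk
    exact Nat.le_floor (by linarith)
  calc (#{k ∈ Icc 1 M | approxPValue M t k ≤ x} : ℝ)
      ≤ ⌊x * (M + 1)⌋₊ := by
        exact_mod_cast (card_le_card hsub).trans (card_filter_card_filter_le_le ht _)
    _ ≤ x * (M + 1) := Nat.floor_le (by positivity)

theorem exists_le_of_mul_sum_le_sum_mul {ι : Type*} [Fintype ι] [Nonempty ι] {w : ι → ℝ}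
    (hw : ∀ j, 0 < w j) {φ : ℝ → ℝ} {s : Set ℝ} (hφ : StrictAntiOn φ s) {q : ι → ℝ}
    (hq : ∀ j, q j ∈ s) {x : ℝ} (hx : x ∈ s) (h : (∑ j, w j) * φ x ≤ ∑ j, w j * φ (q j)) :
    ∃ j, q j ≤ x := by
  by_contra! hlt
  have : ∑ j, w j * φ (q j) < ∑ j, w j * φ x :=
    sum_lt_sum_of_nonempty univ_nonempty fun j _ =>
      mul_lt_mul_of_pos_left (hφ hx (hq j) (hlt j)) (hw j)
  rw [← sum_mul] at this
  linarith

section Fisher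

variable {ι : Type*} [Fintype ι]

noncomputable def fisherStat (M : ℕ) (w : ι → ℝ) (φ : ℝ → ℝ) (T : ℕ → ι → ℝ) (i : ℕ) : ℝ :=
  ∑ j, w j * φ (approxPValue M (fun l => T l j) i)

/-- The global p-value `p_{n,M}(W^{[0]})`; for `M = 0` it is `1 / 0 * 0 = 0`. -/
noncomputable def combinedPValue (M : ℕ) (w : ι → ℝ) (φ : ℝ → ℝ) (T : ℕ → ι → ℝ) : ℝ :=
  1 / (M : ℝ) * ∑ k ∈ Icc 1 M,
    if fisherStat M w φ T 0 ≤ fisherStat M w φ T k then (1 : ℝ) else 0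

theorem combinedPValue_le {M : ℕ} {w : ι → ℝ} (hw : ∀ j, 0 < w j) {φ : ℝ → ℝ}
    (hφ : StrictAntiOn φ (Set.Ioo 0 1)) (hφ_nonneg : ∀ p ∈ Set.Ioo (0 : ℝ) 1, 0 ≤ φ p)
    {T : ℕ → ι → ℝ} (hT : ∀ j, Set.InjOn (fun l => T l j) (Icc 1 M))
    {x δ : ℝ} (hx : x ∈ Set.Ioo 0 1) (hδ : δ ∈ Set.Ioo 0 1) (j₀ : ι)
    (hxδ : (∑ j, w j) * φ x ≤ w j₀ * φ δ) (h₀ : approxPValue M (fun l => T l j₀) 0 ≤ δ) :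
    combinedPValue M w φ T ≤ 2 * Fintype.card ι * x := by
  have : Nonempty ι := ⟨j₀⟩
  have hp := fun j i => approxPValue_mem_Ioo M (fun l => T l j) i
  have hstat₀ : (∑ j, w j) * φ x ≤ fisherStat M w φ T 0 := by
    calc (∑ j, w j) * φ x ≤ w j₀ * φ δ := hxδ
      _ ≤ w j₀ * φ (approxPValue M (fun l => T l j₀) 0) :=
        mul_le_mul_of_nonneg_left (hφ.antitoneOn (hp j₀ 0) hδ h₀) (hw j₀).le
      _ ≤ fisherStat M w φ T 0 :=
        single_le_sum (f := fun j => w j * φ (approxPValue M (fun l => T l j) 0))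
          (fun j _ => mul_nonneg (hw j).le (hφ_nonneg _ (hp j 0))) (mem_univ j₀)
  have hsub : {k ∈ Icc 1 M | fisherStat M w φ T 0 ≤ fisherStat M w φ T k} ⊆
      univ.biUnion fun j => {k ∈ Icc 1 M | approxPValue M (fun l => T l j) k ≤ x} := by
    intro k hk
    rw [mem_filter] at hk
    obtain ⟨j, hj⟩ := exists_le_of_mul_sum_le_sum_mul hw hφ (fun j => hp j k) hx
      (hstat₀.trans hk.2)
    exact mem_biUnion.2 ⟨j, mem_univ j, mem_filter.2 ⟨hk.1, hj⟩⟩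
  have hcount : (#{k ∈ Icc 1 M | fisherStat M w φ T 0 ≤ fisherStat M w φ T k} : ℝ)
      ≤ Fintype.card ι * (x * (M + 1)) := by
    calc (#{k ∈ Icc 1 M | fisherStat M w φ T 0 ≤ fisherStat M w φ T k} : ℝ)
        ≤ ∑ j, (#{k ∈ Icc 1 M | approxPValue M (fun l => T l j) k ≤ x} : ℝ) := by
          exact_mod_cast (card_le_card hsub).trans card_biUnion_le
      _ ≤ ∑ _j : ι, x * (M + 1) :=
          sum_le_sum fun j _ => card_filter_approxPValue_le (hT j) hx.1.le
      _ = Fintype.card ι * (x * (M + 1)) := by rw [sum_const, card_univ, nsmul_eq_mul]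
  rw [combinedPValue, sum_boole, one_div_mul_eq_div]
  rcases Nat.eq_zero_or_pos M with rfl | hM
  · simp only [Nat.cast_zero, div_zero]
    have := hx.1
    positivity
  · have hM' : (1 : ℝ) ≤ M := by exact_mod_cast hM
    rw [div_le_iff₀ (by positivity)]
    nlinarith [hx.1]

end Fisher

theorem ite_le_eq_indicator {α : Type*} (f g : α → ℝ) :
    (fun x => if f x ≤ g x then (1 : ℝ) else 0) = {x | f x ≤ g x}.indicator 1 := by
  ext x
  simp [Set.indicator_apply]

section Probability

variable {Ω : Type*} [MeasurableSpace Ω] {P : Measure Ω}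

section Replicates

variable {𝒳 𝒱 : Type*} [MeasurableSpace 𝒳] [MeasurableSpace 𝒱]
  {X : Ω → 𝒳} {V : ℕ → Ω → 𝒱} {f : 𝒳 → ℝ} {g : 𝒳 × 𝒱 → ℝ} {T : ℕ → Ω → ℝ}

theorem measurable_replicate (hX : Measurable X) (hV : ∀ i, Measurable (V i))
    (hf : Measurable f) (hg : Measurable g)
    (hT : ∀ i ω, T i ω = if i = 0 then f (X ω) else g (X ω, V i ω)) (i : ℕ) :
    Measurable (T i) := by
  simp only [funext (hT i)]
  split_ifs
  · exact hf.comp hX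
  · exact hg.comp (hX.prodMk (hV i))

theorem measureReal_le_replicate_eq [IsFiniteMeasure P] (hX : Measurable X)
    (hV : ∀ i, Measurable (V i)) {ν : Measure 𝒱} (hlaw : ∀ i, 1 ≤ i → P.map (V i) = ν)
    (hindep : IndepFun X (fun ω i => V (i + 1) ω) P) (hf : Measurable f) (hg : Measurable g)
    (hT : ∀ i ω, T i ω = if i = 0 then f (X ω) else g (X ω, V i ω)) {l : ℕ} (hl : 1 ≤ l) :
    P.real {ω | T 0 ω ≤ T l ω} = P.real {ω | T 0 ω ≤ T 1 ω} := by
  have hindep' : ∀ i, 1 ≤ i → IndepFun X (V i) P := fun i hi => by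
    simpa [Function.comp_def, Nat.sub_add_cancel hi] using
      hindep.comp measurable_id (measurable_pi_apply (i - 1))
  have hident : IdentDistrib (V l) (V 1) P P :=
    ⟨(hV l).aemeasurable, (hV 1).aemeasurable, by rw [hlaw l hl, hlaw 1 le_rfl]⟩
  have hpair := (IdentDistrib.refl hX.aemeasurable).prodMk hident (hindep' l hl) (hindep' 1 le_rfl)
  simp only [hT, if_pos, if_neg (Nat.one_le_iff_ne_zero.1 hl), if_neg one_ne_zero]
  exact congrArg ENNReal.toReal <|
    hpair.measure_mem_eq (measurableSet_le (hf.comp measurable_fst) hg)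

end Replicates

theorem integrable_ite_le [IsFiniteMeasure P] {f g : Ω → ℝ} (hf : Measurable f)
    (hg : Measurable g) : Integrable (fun ω => if f ω ≤ g ω then (1 : ℝ) else 0) P := by
  rw [ite_le_eq_indicator]
  exact (integrable_const 1).indicator (measurableSet_le hf hg)

theorem integral_ite_le {f g : Ω → ℝ} (hf : Measurable f) (hg : Measurable g) :
    ∫ ω, (if f ω ≤ g ω then (1 : ℝ) else 0) ∂P = P.real {ω | f ω ≤ g ω} := by
  rw [ite_le_eq_indicator, integral_indicator_one (measurableSet_le hf hg)]

theorem integrable_approxPValue [IsFiniteMeasure P] (M : ℕ) {t : ℕ → Ω → ℝ}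
    (ht : ∀ l, Measurable (t l)) (i : ℕ) :
    Integrable (fun ω => approxPValue M (t · ω) i) P :=
  ((integrable_const _).add
    (integrable_finsetSum _ fun l _ => integrable_ite_le (ht i) (ht l))).const_mul _

variable [IsProbabilityMeasure P]

theorem integral_approxPValue (M : ℕ) {t : ℕ → Ω → ℝ} (ht : ∀ l, Measurable (t l)) (i : ℕ) :
    ∫ ω, approxPValue M (t · ω) i ∂P
      = 1 / ((M : ℝ) + 1) * (1 / 2 + ∑ l ∈ Icc 1 M, P.real {ω | t i ω ≤ t l ω}) := by
  simp only [approxPValue]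
  rw [integral_const_mul, integral_add (integrable_const _)
      (integrable_finsetSum _ fun l _ => integrable_ite_le (ht i) (ht l)),
    integral_const, integral_finsetSum _ fun l _ => integrable_ite_le (ht i) (ht l)]
  simp only [integral_ite_le (ht i) (ht _), probReal_univ, smul_eq_mul, one_mul]

theorem measureReal_le_approxPValue_le {M : ℕ} {t : ℕ → Ω → ℝ} (ht : ∀ l, Measurable (t l))
    (hexch : ∀ l ∈ Icc 1 M, P.real {ω | t 0 ω ≤ t l ω} = P.real {ω | t 0 ω ≤ t 1 ω})
    {δ : ℝ} (hδ : 0 < δ) :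
    P.real {ω | δ ≤ approxPValue M (t · ω) 0}
      ≤ (1 / ((M : ℝ) + 1) + P.real {ω | t 0 ω ≤ t 1 ω}) / δ := by
  set a := P.real {ω | t 0 ω ≤ t 1 ω}
  have hmean : ∫ ω, approxPValue M (t · ω) 0 ∂P ≤ 1 / ((M : ℝ) + 1) + a := by
    rw [integral_approxPValue M ht, sum_congr rfl hexch, sum_const, Nat.card_Icc,
      nsmul_eq_mul, Nat.add_sub_cancel]
    have ha : 0 ≤ a := measureReal_nonneg
    rw [one_div_mul_eq_div, div_le_iff₀ (by positivity)]
    field_simp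
    nlinarith
  calc P.real {ω | δ ≤ approxPValue M (t · ω) 0}
      ≤ (∫ ω, approxPValue M (t · ω) 0 ∂P) / δ := by
        rw [le_div_iff₀ hδ, mul_comm]
        exact mul_meas_ge_le_integral_of_nonneg
          (Eventually.of_forall fun ω => (approxPValue_mem_Ioo M _ 0).1.le)
          (integrable_approxPValue M ht 0) δ
    _ ≤ (1 / ((M : ℝ) + 1) + a) / δ := by gcongr

theorem tendsto_measure_le_approxPValue {M : ℕ → ℕ} (hM : Tendsto M atTop atTop)
    {t : ℕ → ℕ → Ω → ℝ} (ht : ∀ n l, Measurable (t n l))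
    (hexch : ∀ n, ∀ l ∈ Icc 1 (M n),
      P.real {ω | t n 0 ω ≤ t n l ω} = P.real {ω | t n 0 ω ≤ t n 1 ω})
    (hcons : Tendsto (fun n => P.real {ω | t n 0 ω ≤ t n 1 ω}) atTop (𝓝 0))
    {δ : ℝ} (hδ : 0 < δ) :
    Tendsto (fun n => P {ω | δ ≤ approxPValue (M n) (t n · ω) 0}) atTop (𝓝 0) := by
  rw [← ENNReal.tendsto_toReal_iff (fun n => measure_ne_top P _) ENNReal.zero_ne_top,
    ENNReal.toReal_zero]
  have hbound : Tendsto (fun n => (1 / ((M n : ℝ) + 1) + P.real {ω | t n 0 ω ≤ t n 1 ω}) / δ)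
      atTop (𝓝 0) := by
    simpa using ((tendsto_one_div_add_atTop_nhds_zero_nat.comp hM).add hcons).div_const δ
  exact squeeze_zero (fun n => measureReal_nonneg)
    (fun n => measureReal_le_approxPValue_le (ht n) (hexch n) hδ) hbound

end Probability

theorem exists_mem_Ioo_mul_lt {ε C : ℝ} (hε : 0 < ε) (hC : 0 ≤ C) :
    ∃ x ∈ Set.Ioo (0 : ℝ) 1, C * x < ε := by
  obtain ⟨c, hc, hcε⟩ := exists_pos_mul_lt hε C
  exact ⟨min c (1 / 2), ⟨lt_min hc one_half_pos, (min_le_right _ _).trans_lt one_half_lt_one⟩,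
    (mul_le_mul_of_nonneg_left (min_le_left _ _) hC).trans_lt hcε⟩

theorem stmt4_general
    {Ω : Type*} [MeasurableSpace Ω] (P : Measure Ω) [IsProbabilityMeasure P]
    (r : ℕ)
    (𝒳 𝒱 : ℕ → Type*) [∀ n, MeasurableSpace (𝒳 n)] [∀ n, MeasurableSpace (𝒱 n)]
    (X : ∀ n, Ω → 𝒳 n) (hXmeas : ∀ n, Measurable (X n))
    (ν : ∀ n, Measure (𝒱 n))
    (V : ∀ n, ℕ → Ω → 𝒱 n) (hVmeas : ∀ n i, Measurable (V n i))
    (hVlaw : ∀ n i, 1 ≤ i → Measure.map (V n i) P = ν n)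
    (hVindepX : ∀ n, IndepFun (X n) (fun ω (i : ℕ) => V n (i + 1) ω) P)
    (f : ∀ n, 𝒳 n → (Fin r → ℝ)) (hf : ∀ n, Measurable (f n))
    (g : ∀ n, 𝒳 n × 𝒱 n → (Fin r → ℝ)) (hg : ∀ n, Measurable (g n))
    (Trep : ℕ → ℕ → Ω → (Fin r → ℝ))
    (hTrep : ∀ n i ω, Trep n i ω = if i = 0 then f n (X n ω) else g n (X n ω, V n i ω))
    (M : ℕ → ℕ) (hMtop : Tendsto M atTop atTop)
    -- ψ of Fisher type: strictly positive weights and a decreasing bijection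
    -- φ : (0,1) → (0,∞), so ψ(p) = Σ_j w_j φ(p_j)
    (w : Fin r → ℝ) (hw : ∀ j, 0 < w j)
    (φ : ℝ → ℝ)
    (hφanti : StrictAntiOn φ (Set.Ioo (0 : ℝ) 1))
    (hφbij : Set.BijOn φ (Set.Ioo (0 : ℝ) 1) (Set.Ioi (0 : ℝ)))
    -- (ii) there exists j0 such that P(T_{n,j0}^{[1]} ≥ T_{n,j0}) → 0
    (j0 : Fin r)
    (hj0 : Tendsto (fun n => (P {ω | Trep n 0 ω j0 ≤ Trep n 1 ω j0}).toReal)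
        atTop (𝓝 0))
    -- (iii) no ties among the bootstrap replicates
    (hties : ∀ n, ∀ᵐ ω ∂P, ∀ j : Fin r, ∀ k ∈ Finset.Icc 1 (M n), ∀ l ∈ Finset.Icc 1 (M n),
        k ≠ l → Trep n k ω j ≠ Trep n l ω j) :
    ∀ ε : ℝ, 0 < ε →
      Tendsto (fun n => P {ω | ε ≤
          (1 / (M n : ℝ)) * (∑ k ∈ Finset.Icc 1 (M n),
            if (∑ j, w j * φ ((1 / ((M n : ℝ) + 1)) * (1 / 2 + ∑ l ∈ Finset.Icc 1 (M n),
                  if Trep n 0 ω j ≤ Trep n l ω j then (1 : ℝ) else 0)))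
                ≤ (∑ j, w j * φ ((1 / ((M n : ℝ) + 1)) * (1 / 2 + ∑ l ∈ Finset.Icc 1 (M n),
                  if Trep n k ω j ≤ Trep n l ω j then (1 : ℝ) else 0)))
              then (1 : ℝ) else 0)})
        atTop (𝓝 0) := by
  intro ε hε
  obtain ⟨x, hx, hxε⟩ := exists_mem_Ioo_mul_lt hε (by positivity : (0 : ℝ) ≤ 2 * r)
  have hφpos : ∀ p ∈ Set.Ioo (0 : ℝ) 1, 0 < φ p := fun p hp => hφbij.mapsTo hp
  obtain ⟨δ, hδ, hφδ⟩ := hφbij.surjOn (show (∑ j, w j) * φ x / w j0 ∈ Set.Ioi 0 from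
    div_pos (mul_pos (sum_pos (fun j _ => hw j) ⟨j0, mem_univ j0⟩) (hφpos x hx)) (hw j0))
  have hxδ : (∑ j, w j) * φ x ≤ w j0 * φ δ := by rw [hφδ, mul_div_cancel₀ _ (hw j0).ne']
  have hT : ∀ n i ω, Trep n i ω j0 = if i = 0 then f n (X n ω) j0 else g n (X n ω, V n i ω) j0 :=
    fun n i ω => by rw [hTrep]; split_ifs <;> rfl
  have hmarg := tendsto_measure_le_approxPValue hMtop
    (fun n => measurable_replicate (hXmeas n) (hVmeas n) (hf n).eval (hg n).eval (hT n))
    (fun n l hl => measureReal_le_replicate_eq (hXmeas n) (hVmeas n) (hVlaw n) (hVindepX n)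
      (hf n).eval (hg n).eval (hT n) (mem_Icc.1 hl).1) hj0 hδ.1
  refine tendsto_of_tendsto_of_tendsto_of_le_of_le tendsto_const_nhds hmarg (fun _ => zero_le)
    fun n => measure_mono_ae ?_
  filter_upwards [hties n] with ω hω hεω
  by_contra hδω
  have hle := combinedPValue_le hw hφanti (fun p hp => (hφpos p hp).le) (T := fun l => Trep n l ω)
    (fun j k hk l hl hkl => by_contra fun hne => hω j k hk l hl hne hkl) hx hδ j0 hxδ
    (not_le.1 hδω).le
  have hεω' : ε ≤ combinedPValue (M n) w φ (fun l => Trep n l ω) := hεω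
  rw [Fintype.card_fin] at hle
  linarith

/-- In the combining setup with a Fisher-type combining function
`ψ(p_1,…,p_r) = Σ_j w_j φ(p_j)` (`w_j > 0`, `φ : (0,1) → (0,∞)` a decreasing bijection),
if (ii) there is a `j0` with `P(T_{n,j0}^{[1]} ≥ T_{n,j0}) → 0`, and (iii) for every `n`,
almost surely and for each `j`, the bootstrap replicates `T_{n,j}^{[1]}, …, T_{n,j}^{[M_n]}`
are pairwise distinct, then the global approximate p-value
`p_{n,M_n}(W_{n,M_n}^{[0]}) = (1/M_n) Σ_{k=1}^{M_n} 1(W_{n,M_n}^{[k]} ≥ W_{n,M_n}^{[0]})`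
converges to `0` in probability. -/
theorem stmt4
    {Ω : Type*} [MeasurableSpace Ω] (P : Measure Ω) [IsProbabilityMeasure P]
    (r : ℕ) (hr : 1 ≤ r)
    (𝒳 𝒱 : ℕ → Type*) [∀ n, MeasurableSpace (𝒳 n)] [∀ n, MeasurableSpace (𝒱 n)]
    (X : ∀ n, Ω → 𝒳 n) (hXmeas : ∀ n, Measurable (X n))
    (ν : ∀ n, Measure (𝒱 n)) [∀ n, IsProbabilityMeasure (ν n)]
    (V : ∀ n, ℕ → Ω → 𝒱 n) (hVmeas : ∀ n i, Measurable (V n i))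
    (hVlaw : ∀ n i, 1 ≤ i → Measure.map (V n i) P = ν n)
    (hViid : ∀ n, iIndepFun
        (fun i => V n (i + 1)) P)
    (hVindepX : ∀ n, IndepFun (X n) (fun ω (i : ℕ) => V n (i + 1) ω) P)
    (f : ∀ n, 𝒳 n → (Fin r → ℝ)) (hf : ∀ n, Measurable (f n))
    (g : ∀ n, 𝒳 n × 𝒱 n → (Fin r → ℝ)) (hg : ∀ n, Measurable (g n))
    (Trep : ℕ → ℕ → Ω → (Fin r → ℝ))
    (hTrep : ∀ n i ω, Trep n i ω = if i = 0 then f n (X n ω) else g n (X n ω, V n i ω))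
    (M : ℕ → ℕ) (hM : ∀ n, 1 ≤ M n) (hMtop : Tendsto M atTop atTop)
    -- ψ of Fisher type: strictly positive weights and a decreasing bijection
    -- φ : (0,1) → (0,∞), so ψ(p) = Σ_j w_j φ(p_j)
    (w : Fin r → ℝ) (hw : ∀ j, 0 < w j)
    (φ : ℝ → ℝ)
    (hφanti : StrictAntiOn φ (Set.Ioo (0 : ℝ) 1))
    (hφbij : Set.BijOn φ (Set.Ioo (0 : ℝ) 1) (Set.Ioi (0 : ℝ)))
    -- (ii) there exists j0 such that P(T_{n,j0}^{[1]} ≥ T_{n,j0}) → 0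
    (j0 : Fin r)
    (hj0 : Tendsto (fun n => (P {ω | Trep n 0 ω j0 ≤ Trep n 1 ω j0}).toReal)
        atTop (𝓝 0))
    -- (iii) no ties among the bootstrap replicates
    (hties : ∀ n, ∀ᵐ ω ∂P, ∀ j : Fin r, ∀ k ∈ Finset.Icc 1 (M n), ∀ l ∈ Finset.Icc 1 (M n),
        k ≠ l → Trep n k ω j ≠ Trep n l ω j) :
    ∀ ε : ℝ, 0 < ε →
      Tendsto (fun n => P {ω | ε ≤
          (1 / (M n : ℝ)) * (∑ k ∈ Finset.Icc 1 (M n),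
            if (∑ j, w j * φ ((1 / ((M n : ℝ) + 1)) * (1 / 2 + ∑ l ∈ Finset.Icc 1 (M n),
                  if Trep n 0 ω j ≤ Trep n l ω j then (1 : ℝ) else 0)))
                ≤ (∑ j, w j * φ ((1 / ((M n : ℝ) + 1)) * (1 / 2 + ∑ l ∈ Finset.Icc 1 (M n),
                  if Trep n k ω j ≤ Trep n l ω j then (1 : ℝ) else 0)))
              then (1 : ℝ) else 0)})
        atTop (𝓝 0) :=
  stmt4_general P r 𝒳 𝒱 X hXmeas ν V hVmeas hVlaw hVindepX f hf g hg Trep hTrep M hMtop w hw φ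
    hφanti hφbij j0 hj0 hties
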